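/- The matrix U = (1/2 - η)R + η C^dev with η = (m-k)/(k(m-1)+m-k) satisfies the fixed-point equation U = (1 - p_1 α) U + (α/k)(J̄_n - I_n) U W + (α/k) C^dev W, where p_1 = k/m, p_2 = k(k-1)/(m(m-1)), and W = p_2 J_m + (p_1 - p_2) I_m. -/

import Mathlib

open Matrix BigOperators

/-- The all-ones m×m matrix. -/
def Jmat (m : ℕ) : Matrix (Fin m) (Fin m) ℝ := Matrix.of fun _ _ => (1 : ℝ)

/-- The matrix `J̄_n = (1/n) J_n`. -/
noncomputable def Jbar (n : ℕ) : Matrix (Fin n) (Fin n) ℝ := ((n : ℝ))⁻¹ • Jmat n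

lemma lem_GW {n m : ℕ} (a b : ℝ) (g : Matrix (Fin n) (Fin m) ℝ) :
    g * (a • Jmat m + b • (1 : Matrix (Fin m) (Fin m) ℝ))
      = b • g + Matrix.of fun i _ => a * ∑ l, g i l := by
  ext i j
  simp only [Matrix.mul_apply, Matrix.add_apply, Matrix.smul_apply, Jmat, Matrix.of_apply,
    Matrix.one_apply, smul_eq_mul, mul_one, mul_add, mul_ite, mul_zero, Finset.mul_sum]
  rw [Finset.sum_add_distrib, Finset.sum_ite_eq' Finset.univ j (fun l => g i l * b)]
  simp only [Finset.mem_univ, if_true]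
  rw [add_comm, mul_comm]
  congr 1
  exact Finset.sum_congr rfl fun l _ => mul_comm _ _

lemma lem_J {n m : ℕ} (g : Matrix (Fin n) (Fin m) ℝ)
    (h : ∀ j, ∑ i, g i j = 0) : Jbar n * g = 0 := by
  ext i j
  simp only [Jbar, Jmat, Matrix.mul_apply, Matrix.smul_apply, Matrix.of_apply,
    Matrix.zero_apply, smul_eq_mul, one_mul]
  rw [← Finset.mul_sum, h j, mul_zero]

lemma aux {n m : ℕ} (α kk η p1 p2 q : ℝ) (hkk : kk ≠ 0)
    (R Cdev : Matrix (Fin n) (Fin m) ℝ) (W : Matrix (Fin m) (Fin m) ℝ)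
    (hJR : Jbar n * R = 0) (hJC : Jbar n * Cdev = 0)
    (hRW : R * W = (kk * p1) • R)
    (hCW : Cdev * W = (p1 - p2) • Cdev + q • R)
    (hb : (1 - η) * (p1 - p2) = kk * p1 * η)
    (ha : (1 - η) * q = (1 - 2*η) * (kk * p1)) :
    (1/2 - η) • R + η • Cdev
      = (1 - p1 * α) • ((1/2 - η) • R + η • Cdev)
        + (α / kk) • ((Jbar n - 1) * ((1/2 - η) • R + η • Cdev) * W)
        + (α / kk) • (Cdev * W) := by
  have hJU : Jbar n * ((1/2 - η) • R + η • Cdev) = 0 := by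
    rw [Matrix.mul_add, Matrix.mul_smul, Matrix.mul_smul, hJR, hJC]; simp
  have h2 : (Jbar n - 1) * ((1/2 - η) • R + η • Cdev)
      = -((1/2 - η) • R + η • Cdev) := by
    rw [Matrix.sub_mul, hJU, Matrix.one_mul, zero_sub]
  rw [h2, Matrix.neg_mul, Matrix.add_mul, Matrix.smul_mul, Matrix.smul_mul, hRW, hCW]
  match_scalars
  · field_simp
    linear_combination (-2*α) * ha
  · field_simp
    linear_combination (-α) * hb

theorem stmt_17 (n m k : ℕ) (hn : 0 < n) (hk : 1 ≤ k) (hkm : k ≤ m) (hm : 2 ≤ m)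
    (α : ℝ) (C : Matrix (Fin n) (Fin m) ℝ) :
    letI colMean : Fin m → ℝ := fun j => (1 / (n : ℝ)) * ∑ i, C i j
    letI rowMean : Fin n → ℝ := fun i => (1 / (m : ℝ)) * ∑ j, C i j
    letI globalMean : ℝ := (1 / ((n : ℝ) * (m : ℝ))) * ∑ i, ∑ j, C i j
    letI R : Matrix (Fin n) (Fin m) ℝ := Matrix.of fun i _ => rowMean i - globalMean
    letI Cdev : Matrix (Fin n) (Fin m) ℝ := Matrix.of fun i j => C i j - colMean j
    letI η : ℝ := ((m : ℝ) - k) / ((k : ℝ) * ((m : ℝ) - 1) + (m : ℝ) - k)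
    letI U : Matrix (Fin n) (Fin m) ℝ := (1 / 2 - η) • R + η • Cdev
    letI p1 : ℝ := (k : ℝ) / (m : ℝ)
    letI p2 : ℝ := (k : ℝ) * ((k : ℝ) - 1) / ((m : ℝ) * ((m : ℝ) - 1))
    letI W : Matrix (Fin m) (Fin m) ℝ := p2 • Jmat m + (p1 - p2) • 1
    U = (1 - p1 * α) • U + (α / (k : ℝ)) • ((Jbar n - 1) * U * W)
        + (α / (k : ℝ)) • (Cdev * W) := by
  have hn0 : (n:ℝ) ≠ 0 := by positivity
  have hm0 : (m:ℝ) ≠ 0 := by positivity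
  have hk1 : (1:ℝ) ≤ (k:ℝ) := by exact_mod_cast hk
  have hmk : (k:ℝ) ≤ (m:ℝ) := by exact_mod_cast hkm
  have hm2 : (2:ℝ) ≤ (m:ℝ) := by exact_mod_cast hm
  have hk0 : (k:ℝ) ≠ 0 := by linarith
  have hm1 : (m:ℝ) - 1 ≠ 0 := by linarith
  have hD : (k:ℝ) * ((m:ℝ) - 1) + (m:ℝ) - (k:ℝ) ≠ 0 := by nlinarith
  set rowMean : Fin n → ℝ := fun i => (1 / (m : ℝ)) * ∑ j, C i j with hrowM
  set colMean : Fin m → ℝ := fun j => (1 / (n : ℝ)) * ∑ i, C i j with hcolM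
  set globalMean : ℝ := (1 / ((n : ℝ) * (m : ℝ))) * ∑ i, ∑ j, C i j with hgM
  set R : Matrix (Fin n) (Fin m) ℝ := Matrix.of fun i _ => rowMean i - globalMean with hR
  set Cdev : Matrix (Fin n) (Fin m) ℝ := Matrix.of fun i j => C i j - colMean j with hC
  set η : ℝ := ((m : ℝ) - k) / ((k : ℝ) * ((m : ℝ) - 1) + (m : ℝ) - k) with hη
  set p1 : ℝ := (k : ℝ) / (m : ℝ) with hp1
  set p2 : ℝ := (k : ℝ) * ((k : ℝ) - 1) / ((m : ℝ) * ((m : ℝ) - 1)) with hp2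
  have hcol : ∑ l, colMean l = (m:ℝ) * globalMean := by
    simp only [hcolM, hgM]
    rw [← Finset.mul_sum, Finset.sum_comm]
    field_simp
  have hrowSum : ∀ i, ∑ l, C i l = (m:ℝ) * rowMean i := by
    intro i
    simp only [hrowM]
    field_simp
  have hJR : Jbar n * R = 0 := by
    apply lem_J
    intro j
    simp only [hR, Matrix.of_apply]
    rw [Finset.sum_sub_distrib, Finset.sum_const, Finset.card_univ, Fintype.card_fin,
      nsmul_eq_mul]
    simp only [hrowM, hgM]
    rw [← Finset.mul_sum]
    field_simp
    ring
  have hJC : Jbar n * Cdev = 0 := by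
    apply lem_J
    intro j
    simp only [hC, Matrix.of_apply]
    rw [Finset.sum_sub_distrib, Finset.sum_const, Finset.card_univ, Fintype.card_fin,
      nsmul_eq_mul]
    simp only [hcolM]
    field_simp
    ring
  have hRW : R * (p2 • Jmat m + (p1 - p2) • 1) = ((k:ℝ) * p1) • R := by
    rw [lem_GW]
    ext i j
    simp only [hR, Matrix.add_apply, Matrix.smul_apply, Matrix.of_apply, smul_eq_mul,
      Finset.sum_const, Finset.card_univ, Fintype.card_fin, nsmul_eq_mul]
    rw [hp1, hp2]
    field_simp
    ring
  have hCW : Cdev * (p2 • Jmat m + (p1 - p2) • 1)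
      = (p1 - p2) • Cdev + (p2 * m) • R := by
    rw [lem_GW]
    congr 1
    ext i j
    simp only [hC, hR, Matrix.smul_apply, Matrix.of_apply, smul_eq_mul]
    rw [Finset.sum_sub_distrib, hcol, hrowSum i]
    ring
  have hb : (1 - η) * (p1 - p2) = (k:ℝ) * p1 * η := by
    rw [hη, hp1, hp2]
    field_simp
    ring
  have ha : (1 - η) * (p2 * m) = (1 - 2*η) * ((k:ℝ) * p1) := by
    rw [hη, hp1, hp2]
    field_simp
    ring
  exact aux α (k:ℝ) η p1 p2 (p2 * (m:ℝ)) hk0 R Cdev _ hJR hJC hRW hCW hb ha
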